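/- Let r, s be rational numbers such that A = 16s−8r−12, B = 8r+8s−12 and C = 24s−30 are all integers, and set h = r − s + 3/2 (note that the three corresponding exponents for the pair (r,h) are then also integers). Then for every τ in the upper half-plane, 𝕂₂(r,s)(τ) = e^{−πir}·𝕂₂(r,h)(τ+1). (This is the eta-quotient form of the Pfaff transformation, from which it follows that the Fourier coefficients of 𝕂₂(r,s) and 𝕂₂(r,h) agree up to sign.) -/

import Mathlib

/-- The Dedekind eta function η(τ) = e^{πiτ/12}·∏_{n=1}^∞ (1 − e^{2πinτ}). -/
noncomputable def eta (τ : ℂ) : ℂ :=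
  Complex.exp ((Real.pi : ℂ) * Complex.I * τ / 12) *
    ∏' n : ℕ, (1 - Complex.exp (2 * (Real.pi : ℂ) * Complex.I * ((n : ℂ) + 1) * τ))

/-- The eta quotient 𝕂₂ with integer exponents A, B, C:
𝕂₂(τ) = η(τ/2)^A · η(2τ)^B · η(τ)^{−C}. -/
noncomputable def K2exp (A B C : ℤ) (τ : ℂ) : ℂ :=
  eta (τ / 2) ^ A * eta (2 * τ) ^ B * eta τ ^ (-C)



/-- Sum of logs of the factors of the Euler-type product. -/
noncomputable def Slog (z : ℂ) : ℂ := ∑' n : ℕ, Complex.log (1 - z ^ (n + 1))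

lemma factor_ne_zero {z : ℂ} (hz : ‖z‖ < 1) (m : ℕ) : (1 : ℂ) - z ^ (m + 1) ≠ 0 := by
  intro h
  have h1 : z ^ (m + 1) = 1 := by linear_combination -h
  have : ‖z ^ (m + 1)‖ < 1 := by
    rw [norm_pow]
    exact pow_lt_one₀ (norm_nonneg z) hz (Nat.succ_ne_zero m)
  rw [h1] at this; simp at this

lemma summable_log_aux {z : ℂ} (hz : ‖z‖ < 1) (c : ℕ → ℕ) (hc : ∀ n, n ≤ c n) :
    Summable fun n : ℕ => Complex.log (1 - z ^ (c n + 1)) := by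
  apply Summable.of_norm_bounded_eventually_nat (g := fun n => 3 / 2 * ‖z‖ ^ (n + 1))
  · have hs := (summable_geometric_of_lt_one (norm_nonneg z) hz).mul_left (3 / 2 * ‖z‖)
    exact hs.congr fun n => by rw [pow_succ]; ring
  · have h0 : ∀ n : ℕ, ‖z‖ ^ (c n + 1) ≤ ‖z‖ ^ (n + 1) := fun n =>
      pow_le_pow_of_le_one (norm_nonneg z) hz.le (by have := hc n; omega)
    have h2 : ∀ᶠ n : ℕ in Filter.atTop, ‖z‖ ^ (n + 1) ≤ 1 / 2 := by
      have := (tendsto_pow_atTop_nhds_zero_of_lt_one (norm_nonneg z) hz).comp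
        (Filter.tendsto_add_atTop_nat 1)
      exact this.eventually_le_const (by norm_num)
    filter_upwards [h2] with n hn
    have hb : ‖-(z ^ (c n + 1))‖ ≤ 1 / 2 := by
      rw [norm_neg, norm_pow]; exact le_trans (h0 n) hn
    have := Complex.norm_log_one_add_half_le_self hb
    rw [show (1 : ℂ) + -(z ^ (c n + 1)) = 1 - z ^ (c n + 1) by ring] at this
    refine this.trans ?_
    rw [norm_neg, norm_pow]
    linarith [h0 n]

lemma tprod_eq_exp_Slog_aux {z : ℂ} (hz : ‖z‖ < 1) (c : ℕ → ℕ) (hc : ∀ n, n ≤ c n) :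
    ∏' n : ℕ, (1 - z ^ (c n + 1)) =
      Complex.exp (∑' n : ℕ, Complex.log (1 - z ^ (c n + 1))) := by
  have := Complex.cexp_tsum_eq_tprod (f := fun n => 1 - z ^ (c n + 1))
    (fun n => factor_ne_zero hz (c n)) (summable_log_aux hz c hc)
  exact this.symm

lemma multipliable_aux {z : ℂ} (hz : ‖z‖ < 1) (c : ℕ → ℕ) (hc : ∀ n, n ≤ c n) :
    Multipliable fun n : ℕ => (1 : ℂ) - z ^ (c n + 1) :=
  Complex.multipliable_of_summable_log (f := fun n => 1 - z ^ (c n + 1))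
    (summable_log_aux hz c hc)

lemma tprod_eq_exp_Slog {z : ℂ} (hz : ‖z‖ < 1) :
    ∏' n : ℕ, (1 - z ^ (n + 1)) = Complex.exp (Slog z) :=
  tprod_eq_exp_Slog_aux hz id (fun n => le_refl n)

lemma tprod_split {z : ℂ} (hz : ‖z‖ < 1) :
    ∏' n : ℕ, ((1 : ℂ) - z ^ (n + 1)) =
      (∏' k : ℕ, (1 - z ^ (2 * k + 1))) * ∏' k : ℕ, (1 - (z ^ 2) ^ (k + 1)) := by
  have hz2 : ‖z ^ 2‖ < 1 := by
    rw [norm_pow]; exact pow_lt_one₀ (norm_nonneg z) hz (by norm_num)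
  have he : Multipliable fun k : ℕ => (1 : ℂ) - z ^ (2 * k + 1) := by
    have := multipliable_aux hz (fun k => 2 * k) (fun k => (by omega : k ≤ 2 * k))
    exact this
  have ho' : Multipliable fun k : ℕ => (1 : ℂ) - (z ^ 2) ^ (k + 1) := by
    have := multipliable_aux hz2 id (fun k => le_refl k)
    exact this
  have ho : Multipliable fun k : ℕ => (1 : ℂ) - z ^ (2 * k + 1 + 1) := by
    refine ho'.congr fun k => ?_
    congr 1
    rw [← pow_mul]
    ring_nf
  rw [← tprod_even_mul_odd (f := fun n => (1 : ℂ) - z ^ (n + 1)) he ho]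
  congr 1
  exact tprod_congr fun k => by rw [← pow_mul]; ring_nf

lemma prod_identity {x : ℂ} (hx : ‖x‖ < 1) :
    (∏' n : ℕ, ((1 : ℂ) - (-x) ^ (n + 1))) * (∏' n : ℕ, (1 - x ^ (n + 1))) *
        ∏' n : ℕ, (1 - (x ^ 4) ^ (n + 1)) =
      (∏' n : ℕ, (1 - (x ^ 2) ^ (n + 1))) ^ 3 := by
  have hxm : ‖-x‖ < 1 := by rwa [norm_neg]
  have hx2 : ‖x ^ 2‖ < 1 := by
    rw [norm_pow]; exact pow_lt_one₀ (norm_nonneg x) hx (by norm_num)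
  have hm : Multipliable fun k : ℕ => (1 : ℂ) - (-x) ^ (2 * k + 1) := by
    have := multipliable_aux hxm (fun k => 2 * k) (fun k => (by omega : k ≤ 2 * k))
    exact this
  have hp : Multipliable fun k : ℕ => (1 : ℂ) - x ^ (2 * k + 1) := by
    have := multipliable_aux hx (fun k => 2 * k) (fun k => (by omega : k ≤ 2 * k))
    exact this
  have hodd : (∏' k : ℕ, ((1 : ℂ) - (-x) ^ (2 * k + 1))) *
      (∏' k : ℕ, ((1 : ℂ) - x ^ (2 * k + 1))) =
      ∏' k : ℕ, ((1 : ℂ) - (x ^ 2) ^ (2 * k + 1)) := by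
    rw [← Multipliable.tprod_mul hm hp]
    refine tprod_congr fun k => ?_
    have hodk : Odd (2 * k + 1) := ⟨k, by ring⟩
    rw [hodk.neg_pow, ← pow_mul]
    ring_nf
  have s1 := tprod_split hxm
  have s2 := tprod_split hx
  have s3 := tprod_split hx2
  have hmm : ((-x) ^ 2 : ℂ) = x ^ 2 := by ring
  have h44 : ((x ^ 2) ^ 2 : ℂ) = x ^ 4 := by ring
  rw [hmm] at s1
  rw [h44] at s3
  rw [s1, s2, s3, ← hodd]
  ring

lemma eta_exp {τ : ℂ} (h : ‖Complex.exp (2 * (Real.pi : ℂ) * Complex.I * τ)‖ < 1) :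
    eta τ = Complex.exp ((Real.pi : ℂ) * Complex.I * τ / 12 +
      Slog (Complex.exp (2 * (Real.pi : ℂ) * Complex.I * τ))) := by
  have h1 : eta τ = Complex.exp ((Real.pi : ℂ) * Complex.I * τ / 12) *
      ∏' n : ℕ, (1 - (Complex.exp (2 * (Real.pi : ℂ) * Complex.I * τ)) ^ (n + 1)) := by
    unfold eta
    congr 1
    refine tprod_congr fun n => ?_
    congr 1
    rw [← Complex.exp_nat_mul]
    congr 1
    push_cast
    ring
  rw [h1, tprod_eq_exp_Slog h, ← Complex.exp_add]

/-- The eta-quotient form of the Pfaff transformation: if the exponents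
A = 16s−8r−12, B = 8r+8s−12, C = 24s−30 of 𝕂₂(r,s) are integers, and h = r−s+3/2
(so the exponents A′, B′, C′ of 𝕂₂(r,h) are also integers), then for all τ in the
upper half-plane 𝕂₂(r,s)(τ) = e^{−πir}·𝕂₂(r,h)(τ+1). -/
theorem K2_pfaff (r s : ℚ) (A B C A' B' C' : ℤ)
    (hA : (A : ℚ) = 16*s - 8*r - 12) (hB : (B : ℚ) = 8*r + 8*s - 12)
    (hC : (C : ℚ) = 24*s - 30)
    (hA' : (A' : ℚ) = 16*(r - s + 3/2) - 8*r - 12)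
    (hB' : (B' : ℚ) = 8*r + 8*(r - s + 3/2) - 12)
    (hC' : (C' : ℚ) = 24*(r - s + 3/2) - 30) :
    ∀ τ : ℂ, 0 < τ.im →
      K2exp A B C τ =
        Complex.exp (-(Real.pi : ℂ) * Complex.I * (r : ℂ)) * K2exp A' B' C' (τ + 1) := by
  intro τ hτ
  set w : ℂ := (Real.pi : ℂ) * Complex.I * τ with hw
  set x : ℂ := Complex.exp w with hxdef
  -- norms
  have hx : ‖x‖ < 1 := by
    rw [hxdef, Complex.norm_exp, Real.exp_lt_one_iff]
    have : w.re = -(Real.pi * τ.im) := by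
      rw [hw]
      simp [Complex.mul_re, Complex.mul_im]
    rw [this]
    have := Real.pi_pos
    nlinarith
  have hxm : ‖-x‖ < 1 := by rwa [norm_neg]
  have hx2 : ‖x ^ 2‖ < 1 := by
    rw [norm_pow]; exact pow_lt_one₀ (norm_nonneg x) hx (by norm_num)
  have hx4 : ‖x ^ 4‖ < 1 := by
    rw [norm_pow]; exact pow_lt_one₀ (norm_nonneg x) hx (by norm_num)
  set Sx := Slog x
  set Sm := Slog (-x)
  set S2 := Slog (x ^ 2)
  set S4 := Slog (x ^ 4)
  -- exp argument computations
  have k1 : 2 * (Real.pi : ℂ) * Complex.I * (τ / 2) = w := by rw [hw]; ring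
  have k2 : Complex.exp (2 * (Real.pi : ℂ) * Complex.I * τ) = x ^ 2 := by
    rw [show 2 * (Real.pi : ℂ) * Complex.I * τ = ((2 : ℕ) : ℂ) * w by rw [hw]; push_cast; ring,
      Complex.exp_nat_mul, hxdef]
  have k3 : Complex.exp (2 * (Real.pi : ℂ) * Complex.I * (2 * τ)) = x ^ 4 := by
    rw [show 2 * (Real.pi : ℂ) * Complex.I * (2 * τ) = ((4 : ℕ) : ℂ) * w
        by rw [hw]; push_cast; ring, Complex.exp_nat_mul, hxdef]
  have k4 : Complex.exp (2 * (Real.pi : ℂ) * Complex.I * ((τ + 1) / 2)) = -x := by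
    rw [show 2 * (Real.pi : ℂ) * Complex.I * ((τ + 1) / 2) = w + (Real.pi : ℂ) * Complex.I
        by rw [hw]; ring, Complex.exp_add, Complex.exp_pi_mul_I, hxdef]; ring
  have k5 : Complex.exp (2 * (Real.pi : ℂ) * Complex.I * (τ + 1)) = x ^ 2 := by
    rw [show 2 * (Real.pi : ℂ) * Complex.I * (τ + 1) =
        ((2 : ℕ) : ℂ) * w + 2 * (Real.pi : ℂ) * Complex.I by rw [hw]; push_cast; ring,
      Complex.exp_add, Complex.exp_nat_mul, Complex.exp_two_pi_mul_I, mul_one, hxdef]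
  have k6 : Complex.exp (2 * (Real.pi : ℂ) * Complex.I * (2 * (τ + 1))) = x ^ 4 := by
    rw [show 2 * (Real.pi : ℂ) * Complex.I * (2 * (τ + 1)) =
        ((4 : ℕ) : ℂ) * w + ((2 : ℕ) : ℂ) * (2 * (Real.pi : ℂ) * Complex.I)
        by rw [hw]; push_cast; ring,
      Complex.exp_add, Complex.exp_nat_mul, Complex.exp_nat_mul_two_pi_mul_I, mul_one, hxdef]
  -- the six eta values
  have e1 : eta (τ / 2) = Complex.exp (w / 24 + Sx) := by
    rw [eta_exp (by rw [k1]; exact hx), k1]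
    congr 1
    rw [hw]; ring
  have e2 : eta τ = Complex.exp (w / 12 + S2) := by
    rw [eta_exp (by rw [k2]; exact hx2), k2]
  have e3 : eta (2 * τ) = Complex.exp (w / 6 + S4) := by
    rw [eta_exp (by rw [k3]; exact hx4), k3]
    congr 1
    rw [hw]; ring
  have e4 : eta ((τ + 1) / 2) = Complex.exp (w / 24 + (Real.pi : ℂ) * Complex.I / 24 + Sm) := by
    rw [eta_exp (by rw [k4]; exact hxm), k4]
    congr 1
    rw [hw]; ring
  have e5 : eta (τ + 1) = Complex.exp (w / 12 + (Real.pi : ℂ) * Complex.I / 12 + S2) := by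
    rw [eta_exp (by rw [k5]; exact hx2), k5]
    congr 1
    rw [hw]; ring
  have e6 : eta (2 * (τ + 1)) = Complex.exp (w / 6 + (Real.pi : ℂ) * Complex.I / 6 + S4) := by
    rw [eta_exp (by rw [k6]; exact hx4), k6]
    congr 1
    rw [hw]; ring
  -- key product identity in exp form
  have key : Complex.exp (Sm + Sx + S4 - 3 * S2) = 1 := by
    have h3 : Complex.exp Sm * Complex.exp Sx * Complex.exp S4 = Complex.exp S2 ^ 3 := by
      rw [← tprod_eq_exp_Slog hxm, ← tprod_eq_exp_Slog hx, ← tprod_eq_exp_Slog hx4,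
        ← tprod_eq_exp_Slog hx2]
      exact prod_identity hx
    rw [Complex.exp_sub, Complex.exp_add, Complex.exp_add,
      show (3 : ℂ) * S2 = ((3 : ℕ) : ℂ) * S2 by norm_num, Complex.exp_nat_mul, h3,
      div_self (pow_ne_zero 3 (Complex.exp_ne_zero S2))]
  have keyA : Complex.exp ((A : ℂ) * (Sm + Sx + S4 - 3 * S2)) = 1 := by
    rw [Complex.exp_int_mul, key, one_zpow]
  -- integer relations
  have hAZ : A' = -A := by
    have : (A' : ℚ) = -(A : ℚ) := by rw [hA', hA]; ring
    exact_mod_cast this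
  have hBZ : B' = B - A := by
    have : (B' : ℚ) = (B : ℚ) - (A : ℚ) := by rw [hB', hB, hA]; ring
    exact_mod_cast this
  have hCZ : C' = C - 3 * A := by
    have : (C' : ℚ) = (C : ℚ) - 3 * (A : ℚ) := by rw [hC', hC, hA]; ring
    exact_mod_cast this
  have hAc : (A' : ℂ) = -(A : ℂ) := by rw [hAZ]; push_cast; ring
  have hBc : (B' : ℂ) = (B : ℂ) - (A : ℂ) := by rw [hBZ]; push_cast; ring
  have hCc : (C' : ℂ) = (C : ℂ) - 3 * (A : ℂ) := by rw [hCZ]; push_cast; ring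
  have hr : (r : ℂ) = (A : ℂ) / 24 + (B : ℂ) / 6 - (C : ℂ) / 12 := by
    have hq : (r : ℚ) = (A : ℚ) / 24 + (B : ℚ) / 6 - (C : ℚ) / 12 := by
      rw [hA, hB, hC]; ring
    have := congrArg (fun q : ℚ => (q : ℂ)) hq
    push_cast at this
    exact this
  -- assemble
  unfold K2exp
  rw [e1, e2, e3, e4, e5, e6]
  rw [← Complex.exp_int_mul, ← Complex.exp_int_mul, ← Complex.exp_int_mul,
    ← Complex.exp_int_mul, ← Complex.exp_int_mul, ← Complex.exp_int_mul]
  rw [← Complex.exp_add, ← Complex.exp_add, ← Complex.exp_add, ← Complex.exp_add]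
  rw [show (A : ℂ) * (w / 24 + Sx) + (B : ℂ) * (w / 6 + S4) + (-C : ℤ) * (w / 12 + S2) =
      (-(Real.pi : ℂ) * Complex.I * (r : ℂ) +
        ((A' : ℂ) * (w / 24 + (Real.pi : ℂ) * Complex.I / 24 + Sm) +
          (B' : ℂ) * (w / 6 + (Real.pi : ℂ) * Complex.I / 6 + S4) +
          (-C' : ℤ) * (w / 12 + (Real.pi : ℂ) * Complex.I / 12 + S2))) +
      (A : ℂ) * (Sm + Sx + S4 - 3 * S2) by
    push_cast
    rw [hAc, hBc, hCc, hr]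
    ring]
  rw [Complex.exp_add, keyA, mul_one, Complex.exp_add]
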